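/- arXiv:1602.02069 — 2 statements merged into one kernel-verified Lean document; each statement's English description precedes it below -/
import Mathlib

section
/- The rank of the adjacency matrix of a cograph equals the number of distinct nonzero rows of that matrix. -/
/-!
Keep one vertex for each distinct nonzero row of the adjacency matrix `A`. These vertices induce a
*reduced* cograph (no isolated vertex, no two vertices with the same neighbourhood) whose adjacency
matrix is a principal submatrix of `A`, and the theorem follows once that submatrix is nonsingular.

By Seinsche's theorem a cograph on at least two vertices is disconnected or has a disconnected
complement, so a reduced cograph is a disjoint union or a join of two smaller pieces. Nonsingularity
alone does not survive joins, so the induction carries more: the solution pairs `(x, c)` of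
`A x = c • 𝟙` are the multiples of one pair `(y, k)` with `0 ≤ k < ∑ y` (`IsLevelLine`). A reduced
piece has `k = 1`, which makes its matrix nonsingular; a factor of a join may also be a reduced
cograph plus one isolated vertex `u`, and then `(y, k) = (e_u, 0)`. For a join of pieces `(yᵢ, kᵢ)`
with `αᵢ = ∑ yᵢ`, the coefficients solve a 2 × 2 system with determinant `α₁ α₂ - k₁ k₂ > 0`, and
`∑ y > 1` persists because `(α₁ - k₁) (α₂ - k₂) > 0`.
-/

open scoped Classical

noncomputable section

/-- The real adjacency matrix of a finite simple graph. -/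
def adjM {V : Type*} [Fintype V] (G : SimpleGraph V) : Matrix V V ℝ :=
  G.adjMatrix ℝ

/-- The multiplicity of `μ` as an eigenvalue of the adjacency matrix of `G`
(the dimension of the corresponding eigenspace; `0` if `μ` is not an eigenvalue). -/
def eigMult {V : Type*} [Fintype V] (G : SimpleGraph V) (μ : ℝ) : ℕ :=
  Module.finrank ℝ (Module.End.eigenspace (Matrix.toLin' (adjM G)) μ)

/-- `μ` is an eigenvalue of the adjacency matrix of `G`. -/
def HasEig {V : Type*} [Fintype V] (G : SimpleGraph V) (μ : ℝ) : Prop :=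
  Module.End.HasEigenvalue (Matrix.toLin' (adjM G)) μ

/-- A cograph: no induced path on four vertices. -/
def IsCograph {V : Type*} (G : SimpleGraph V) : Prop :=
  IsEmpty (SimpleGraph.pathGraph 4 ↪g G)

/-- A duplication class: a maximal set of more than one vertex, all with the same
open neighborhood. -/
def IsDupClass {V : Type*} (G : SimpleGraph V) (S : Set V) : Prop :=
  1 < S.ncard ∧ (∀ u ∈ S, ∀ v ∈ S, G.neighborSet u = G.neighborSet v) ∧
    ∀ T : Set V, S ⊆ T → (∀ u ∈ T, ∀ v ∈ T, G.neighborSet u = G.neighborSet v) → T = S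

/-- A coduplication class: a maximal set of more than one vertex, all with the same
closed neighborhood. -/
def IsCodupClass {V : Type*} (G : SimpleGraph V) (S : Set V) : Prop :=
  1 < S.ncard ∧
    (∀ u ∈ S, ∀ v ∈ S, insert u (G.neighborSet u) = insert v (G.neighborSet v)) ∧
    ∀ T : Set V, S ⊆ T →
      (∀ u ∈ T, ∀ v ∈ T, insert u (G.neighborSet u) = insert v (G.neighborSet v)) → T = S

def SimpleGraph.complPathGraphFourEmbedding :
    (SimpleGraph.pathGraph 4)ᶜ ↪g SimpleGraph.pathGraph 4 where
  toFun := ![1, 3, 0, 2]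
  inj' := by intro i j; fin_cases i <;> fin_cases j <;> simp
  map_rel_iff' := by
    intro i j; fin_cases i <;> fin_cases j <;> simp [SimpleGraph.pathGraph_adj] <;> decide

section Cograph

variable {V : Type*} {G : SimpleGraph V}
open SimpleGraph

theorem IsCograph.compl (hG : IsCograph G) : IsCograph Gᶜ :=
  ⟨fun f => hG.false (Embedding.complEquiv.symm (f.comp complPathGraphFourEmbedding))⟩

theorem IsCograph.not_induced_path (hG : IsCograph G) {a b c d : V}
    (hab : G.Adj a b) (hbc : G.Adj b c) (hcd : G.Adj c d)
    (hac : ¬G.Adj a c) (had : ¬G.Adj a d) (hbd : ¬G.Adj b d) : False := by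
  have hca : c ≠ a := fun h => had (h ▸ hcd)
  have hdb : d ≠ b := fun h => had (h ▸ hab)
  have hda : d ≠ a := fun h => hac (h ▸ hcd.symm)
  refine hG.false ⟨⟨![a, b, c, d], fun i j hij => ?_⟩, fun {i j} => ?_⟩
  · fin_cases i <;> fin_cases j <;>
      simp_all [hab.ne, hbc.ne, hcd.ne, hab.ne.symm, hbc.ne.symm, hcd.ne.symm, hca.symm,
        hdb.symm, hda.symm]
  · show G.Adj (![a, b, c, d] i) (![a, b, c, d] j) ↔ (pathGraph 4).Adj i j
    fin_cases i <;> fin_cases j <;>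
      simp [pathGraph_adj, hab, hbc, hcd, hab.symm, hbc.symm, hcd.symm, hac, had, hbd,
        G.adj_comm c a, G.adj_comm d a, G.adj_comm d b]

end Cograph

theorem exists_mul_add_mul_eq_one_of_lt {k₁ k₂ α₁ α₂ : ℝ} (hk₁ : 0 ≤ k₁) (hk₂ : 0 ≤ k₂)
    (h₁ : k₁ < α₁) (h₂ : k₂ < α₂) : ∃ μ₁ μ₂ : ℝ,
      μ₁ * k₁ + μ₂ * α₂ = 1 ∧ μ₁ * α₁ + μ₂ * k₂ = 1 ∧ 1 < μ₁ * α₁ + μ₂ * α₂ := by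
  have hD : 0 < α₁ * α₂ - k₁ * k₂ := by nlinarith
  refine ⟨(α₂ - k₂) / (α₁ * α₂ - k₁ * k₂), (α₁ - k₁) / (α₁ * α₂ - k₁ * k₂), ?_, ?_, ?_⟩ <;>
    rw [div_mul_eq_mul_div, div_mul_eq_mul_div, ← add_div]
  · rw [div_eq_one_iff_eq hD.ne']; ring
  · rw [div_eq_one_iff_eq hD.ne']; ring
  · rw [one_lt_div hD]
    nlinarith

theorem Finset.forall_mem_iff_of_subset {α : Type*} {s t : Finset α} (h : t ⊆ s) {P : α → Prop} :
    (∀ v ∈ s, P v) ↔ (∀ v ∈ t, P v) ∧ ∀ v ∈ s \ t, P v := by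
  rw [← Finset.forall_mem_union, Finset.union_sdiff_of_subset h]

theorem Finset.forall_mem_eq_mul_piecewise_iff {α : Type*} {s t : Finset α} {x f g : α → ℝ} {c : ℝ}
    (h : t ⊆ s) :
    (∀ v ∈ s, x v = c * t.piecewise f g v) ↔
      (∀ v ∈ t, x v = c * f v) ∧ ∀ v ∈ s \ t, x v = c * g v := by
  rw [Finset.forall_mem_iff_of_subset h]
  refine and_congr (forall₂_congr fun v hv => ?_) (forall₂_congr fun v hv => ?_)
  · rw [Finset.piecewise_eq_of_mem _ _ _ hv]
  · rw [Finset.piecewise_eq_of_notMem _ _ _ (Finset.mem_sdiff.mp hv).2]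

namespace SimpleGraph
variable {V : Type*} {G : SimpleGraph V}

structure SeparatesOn (G : SimpleGraph V) (s t : Finset V) : Prop where
  subset : t ⊆ s
  nonempty : t.Nonempty
  sdiff_nonempty : (s \ t).Nonempty
  not_adj : ∀ a ∈ t, ∀ b ∈ s \ t, ¬G.Adj a b

namespace SeparatesOn
variable {s t : Finset V}

theorem symm (h : SeparatesOn G s t) : SeparatesOn G s (s \ t) where
  subset := Finset.sdiff_subset
  nonempty := h.sdiff_nonempty
  sdiff_nonempty := by rw [sdiff_sdiff_eq_self h.subset]; exact h.nonempty
  not_adj a ha b hb hab := by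
    rw [sdiff_sdiff_eq_self h.subset] at hb
    exact h.not_adj b hb a ha hab.symm

theorem ssubset (h : SeparatesOn G s t) : t ⊂ s :=
  Finset.ssubset_iff_subset_ne.mpr ⟨h.subset, by rintro rfl; simpa using h.sdiff_nonempty⟩

end SeparatesOn

theorem separatesOn_insert_of_adj (hG : IsCograph G) {s t : Finset V} {v p q : V}
    (h : SeparatesOn G s t) (hv : v ∉ s) (hp : p ∈ s) (hq : q ∈ t)
    (hvp : ¬G.Adj v p) (hvq : G.Adj v q) (hpq : G.Adj p q) :
    SeparatesOn G (insert v s) (s \ t) where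
  subset := Finset.sdiff_subset.trans (Finset.subset_insert v s)
  nonempty := h.sdiff_nonempty
  sdiff_nonempty := ⟨v, by simp [hv]⟩
  not_adj a ha b hb hab := by
    have hpt : p ∈ t := by
      by_contra hpt
      exact h.not_adj q hq p (Finset.mem_sdiff.mpr ⟨hp, hpt⟩) hpq.symm
    obtain ⟨hb, hbt⟩ := Finset.mem_sdiff.mp hb
    obtain rfl | hbs := Finset.mem_insert.mp hb
    · exact hG.not_induced_path hpq hvq.symm hab.symm (fun h => hvp h.symm)
        (h.not_adj p hpt a ha) (h.not_adj q hq a ha)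
    · have hbt : b ∈ t := by by_contra hbt'; exact hbt (Finset.mem_sdiff.mpr ⟨hbs, hbt'⟩)
      exact h.not_adj b hbt a ha hab.symm

theorem exists_separatesOn_insert (hG : IsCograph G) {s t : Finset V} {v : V}
    (h : SeparatesOn G s t) (hv : v ∉ s) :
    ∃ t', SeparatesOn G (insert v s) t' ∨ SeparatesOn Gᶜ (insert v s) t' := by
  by_cases hall : ∀ w ∈ s, G.Adj v w
  · refine ⟨{v}, Or.inr ⟨by simp, by simp, ?_, ?_⟩⟩
    · obtain ⟨w, hw⟩ := h.nonempty.mono h.subset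
      exact ⟨w, by simp [hw, ne_of_mem_of_not_mem hw hv]⟩
    · simp_all
  by_cases hedge : ∃ p ∈ s, ∃ q ∈ s, ¬G.Adj v p ∧ G.Adj v q ∧ G.Adj p q
  · obtain ⟨p, hp, q, hq, hvp, hvq, hpq⟩ := hedge
    by_cases hqt : q ∈ t
    · exact ⟨_, Or.inl (separatesOn_insert_of_adj hG h hv hp hqt hvp hvq hpq)⟩
    · have := separatesOn_insert_of_adj hG h.symm hv hp (Finset.mem_sdiff.mpr ⟨hq, hqt⟩)
        hvp hvq hpq
      rw [sdiff_sdiff_eq_self h.subset] at this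
      exact ⟨_, Or.inl this⟩
  push Not at hall hedge
  obtain ⟨x, hx, hvx⟩ := hall
  refine ⟨s.filter (¬G.Adj v ·), Or.inl ⟨?_, ⟨x, by simp [hx, hvx]⟩, ⟨v, by simp [hv]⟩, ?_⟩⟩
  · exact (Finset.filter_subset _ _).trans (Finset.subset_insert v s)
  · intro a ha b hb hab
    simp only [Finset.mem_filter, Finset.mem_sdiff, Finset.mem_insert] at ha hb
    obtain ⟨rfl | hbs, hb⟩ := hb
    · exact ha.2 hab.symm
    · exact hedge a ha.1 b hbs ha.2 (by simpa [hbs] using hb) hab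

theorem separatesOn_pair {v w : V} (hvw : v ≠ w) :
    ∃ t, SeparatesOn G {v, w} t ∨ SeparatesOn Gᶜ {v, w} t := by
  have hne : ({v, w} \ {v} : Finset V).Nonempty := ⟨w, by simp [hvw.symm]⟩
  by_cases hadj : G.Adj v w
  · exact ⟨{v}, Or.inr ⟨by simp, by simp, hne, by simp_all⟩⟩
  · exact ⟨{v}, Or.inl ⟨by simp, by simp, hne, by simp_all⟩⟩

theorem exists_separatesOn (hG : IsCograph G) {s : Finset V} (hs : 1 < s.card) :
    ∃ t, SeparatesOn G s t ∨ SeparatesOn Gᶜ s t := by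
  induction s using Finset.induction_on with
  | empty => simp at hs
  | insert v s hv ih =>
    rw [Finset.card_insert_of_notMem hv] at hs
    obtain hs1 | hs1 := (Nat.le_of_lt_succ hs).eq_or_lt
    · obtain ⟨w, rfl⟩ := Finset.card_eq_one.mp hs1.symm
      exact separatesOn_pair (by simpa using hv)
    obtain ⟨t, h | h⟩ := ih hs1
    · exact exists_separatesOn_insert hG h hv
    · obtain ⟨t', h' | h'⟩ := exists_separatesOn_insert hG.compl h hv
      · exact ⟨t', Or.inr h'⟩
      · exact ⟨t', Or.inl (compl_compl G ▸ h')⟩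

def rowSum (G : SimpleGraph V) (t : Finset V) (x : V → ℝ) (v : V) : ℝ :=
  ∑ u ∈ t, G.adjMatrix ℝ v u * x u

section rowSum
variable {s t : Finset V} {x : V → ℝ} {v : V}

theorem rowSum_sdiff_add (h : t ⊆ s) : G.rowSum (s \ t) x v + G.rowSum t x v = G.rowSum s x v :=
  Finset.sum_sdiff h

theorem rowSum_of_forall_adj (h : ∀ u ∈ t, G.Adj v u) : G.rowSum t x v = ∑ u ∈ t, x u :=
  Finset.sum_congr rfl fun u hu => by simp [h u hu]

theorem rowSum_of_forall_not_adj (h : ∀ u ∈ t, ¬G.Adj v u) : G.rowSum t x v = 0 :=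
  Finset.sum_eq_zero fun u hu => by simp [h u hu]

end rowSum

def IsNonsingularOn (G : SimpleGraph V) (t : Finset V) : Prop :=
  ∀ x : V → ℝ, (∀ v ∈ t, G.rowSum t x v = 0) → ∀ v ∈ t, x v = 0

def IsLevelLine (G : SimpleGraph V) (t : Finset V) (y : V → ℝ) (k : ℝ) : Prop :=
  ∀ (x : V → ℝ) (c : ℝ), (∀ v ∈ t, G.rowSum t x v = c) ↔ ∃ a, c = a * k ∧ ∀ v ∈ t, x v = a * y v

theorem isLevelLine_one_iff {t : Finset V} {y : V → ℝ} :
    G.IsLevelLine t y 1 ↔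
      ∀ (x : V → ℝ) (c : ℝ), (∀ v ∈ t, G.rowSum t x v = c) ↔ ∀ v ∈ t, x v = c * y v := by
  simp [IsLevelLine]

theorem IsLevelLine.isNonsingularOn {t : Finset V} {y : V → ℝ} (h : G.IsLevelLine t y 1) :
    G.IsNonsingularOn t := fun x hx v hv => by
  simpa using (isLevelLine_one_iff.mp h x 0).mp hx v hv

namespace SeparatesOn
variable {s t : Finset V} {x : V → ℝ} {c : ℝ}

theorem rowSum_eq (h : G.SeparatesOn s t) {v : V} (hv : v ∈ t) :
    G.rowSum s x v = G.rowSum t x v := by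
  rw [← rowSum_sdiff_add h.subset, rowSum_of_forall_not_adj (h.not_adj v hv), zero_add]

theorem forall_rowSum_eq_iff (h : G.SeparatesOn s t) :
    (∀ v ∈ s, G.rowSum s x v = c) ↔
      (∀ v ∈ t, G.rowSum t x v = c) ∧ ∀ v ∈ s \ t, G.rowSum (s \ t) x v = c := by
  rw [Finset.forall_mem_iff_of_subset h.subset]
  refine and_congr (forall₂_congr fun v hv => ?_) (forall₂_congr fun v hv => ?_)
  · rw [h.rowSum_eq hv]
  · rw [h.symm.rowSum_eq hv]

theorem adj_of_compl (h : Gᶜ.SeparatesOn s t) {a b : V} (ha : a ∈ t) (hb : b ∈ s \ t) :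
    G.Adj a b := by
  by_contra hab
  exact h.not_adj a ha b hb ⟨fun hab' => (Finset.mem_sdiff.mp hb).2 (hab' ▸ ha), hab⟩

theorem rowSum_eq_of_compl (h : Gᶜ.SeparatesOn s t) {v : V} (hv : v ∈ t) :
    G.rowSum s x v = G.rowSum t x v + ∑ u ∈ s \ t, x u := by
  rw [← rowSum_sdiff_add h.subset, rowSum_of_forall_adj fun u hu => h.adj_of_compl hv hu,
    add_comm]

theorem forall_rowSum_eq_iff_of_compl (h : Gᶜ.SeparatesOn s t) :
    (∀ v ∈ s, G.rowSum s x v = c) ↔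
      (∀ v ∈ t, G.rowSum t x v = c - ∑ u ∈ s \ t, x u) ∧
        ∀ v ∈ s \ t, G.rowSum (s \ t) x v = c - ∑ u ∈ t, x u := by
  rw [Finset.forall_mem_iff_of_subset h.subset]
  refine and_congr (forall₂_congr fun v hv => ?_) (forall₂_congr fun v hv => ?_)
  · rw [eq_sub_iff_add_eq, h.rowSum_eq_of_compl hv]
  · rw [eq_sub_iff_add_eq, h.symm.rowSum_eq_of_compl hv, sdiff_sdiff_eq_self h.subset]

end SeparatesOn

theorem SeparatesOn.exists_isLevelLine {s t : Finset V} {y₁ y₂ : V → ℝ}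
    (h : G.SeparatesOn s t) (h₁ : G.IsLevelLine t y₁ 1) (hα₁ : 1 < ∑ v ∈ t, y₁ v)
    (h₂ : G.IsLevelLine (s \ t) y₂ 1) (hα₂ : 1 < ∑ v ∈ s \ t, y₂ v) :
    ∃ y, G.IsLevelLine s y 1 ∧ 1 < ∑ v ∈ s, y v := by
  refine ⟨t.piecewise y₁ y₂, isLevelLine_one_iff.mpr fun x c => ?_, ?_⟩
  · rw [h.forall_rowSum_eq_iff, isLevelLine_one_iff.mp h₁, isLevelLine_one_iff.mp h₂,
      Finset.forall_mem_eq_mul_piecewise_iff h.subset]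
  · rw [Finset.sum_piecewise, Finset.inter_eq_right.mpr h.subset]
    linarith

theorem SeparatesOn.exists_isLevelLine_of_compl {s t : Finset V} {y₁ y₂ : V → ℝ} {k₁ k₂ : ℝ}
    (h : Gᶜ.SeparatesOn s t)
    (h₁ : G.IsLevelLine t y₁ k₁) (hk₁ : 0 ≤ k₁) (hα₁ : k₁ < ∑ v ∈ t, y₁ v)
    (h₂ : G.IsLevelLine (s \ t) y₂ k₂) (hk₂ : 0 ≤ k₂) (hα₂ : k₂ < ∑ v ∈ s \ t, y₂ v) :
    ∃ y, G.IsLevelLine s y 1 ∧ 1 < ∑ v ∈ s, y v := by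
  set α₁ := ∑ v ∈ t, y₁ v with hα₁_def
  set α₂ := ∑ v ∈ s \ t, y₂ v with hα₂_def
  have hD : 0 < α₁ * α₂ - k₁ * k₂ := by nlinarith
  obtain ⟨μ₁, μ₂, hμ₁, hμ₂, hμ⟩ := exists_mul_add_mul_eq_one_of_lt hk₁ hk₂ hα₁ hα₂
  refine ⟨t.piecewise (fun v => μ₁ * y₁ v) (fun v => μ₂ * y₂ v),
    isLevelLine_one_iff.mpr fun x c => ?_, ?_⟩
  · rw [h.forall_rowSum_eq_iff_of_compl, h₁, h₂, Finset.forall_mem_eq_mul_piecewise_iff h.subset]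
    constructor
    · rintro ⟨⟨a, ha, hxa⟩, ⟨b, hb, hxb⟩⟩
      rw [Finset.sum_congr rfl hxb, ← Finset.mul_sum] at ha
      rw [Finset.sum_congr rfl hxa, ← Finset.mul_sum] at hb
      have ha' : (a - c * μ₁) * (α₁ * α₂ - k₁ * k₂) = 0 := by
        linear_combination (-α₂) * hb + k₂ * ha - c * α₂ * hμ₂ + c * k₂ * hμ₁
      have hb' : (b - c * μ₂) * (α₁ * α₂ - k₁ * k₂) = 0 := by
        linear_combination (-α₁) * ha + k₁ * hb - c * α₁ * hμ₁ + c * k₁ * hμ₂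
      rw [mul_eq_zero, sub_eq_zero, or_iff_left hD.ne'] at ha' hb'
      exact ⟨fun v hv => by rw [hxa v hv, ha', mul_assoc],
        fun v hv => by rw [hxb v hv, hb', mul_assoc]⟩
    · rintro ⟨hx₁, hx₂⟩
      refine ⟨⟨c * μ₁, ?_, fun v hv => by rw [hx₁ v hv, mul_assoc]⟩,
        ⟨c * μ₂, ?_, fun v hv => by rw [hx₂ v hv, mul_assoc]⟩⟩
      · rw [Finset.sum_congr rfl hx₂, ← Finset.mul_sum, ← Finset.mul_sum, ← hα₂_def]
        linear_combination (-c) * hμ₁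
      · rw [Finset.sum_congr rfl hx₁, ← Finset.mul_sum, ← Finset.mul_sum, ← hα₁_def]
        linear_combination (-c) * hμ₂
  · rwa [Finset.sum_piecewise, Finset.inter_eq_right.mpr h.subset, ← Finset.mul_sum,
      ← Finset.mul_sum]

theorem rowSum_erase_of_not_adj {t : Finset V} {x : V → ℝ} {u v : V} (h : ¬G.Adj v u) :
    G.rowSum (t.erase u) x v = G.rowSum t x v :=
  Finset.sum_erase t (by simp [h])

theorem isNonsingularOn_of_nonempty_imp {s : Finset V}
    (h : s.Nonempty → ∃ y, G.IsLevelLine s y 1) : G.IsNonsingularOn s := by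
  rcases s.eq_empty_or_nonempty with rfl | hne
  · simp [IsNonsingularOn]
  · obtain ⟨y, hy⟩ := h hne
    exact hy.isNonsingularOn

theorem isLevelLine_single_of_isolated {t : Finset V} {u : V} (hu : u ∈ t)
    (hiso : ∀ w ∈ t, ¬G.Adj u w) (hns : G.IsNonsingularOn (t.erase u)) :
    G.IsLevelLine t (Pi.single u 1) 0 := by
  intro x c
  constructor
  · intro hx
    have hc : c = 0 := by rw [← hx u hu, rowSum_of_forall_not_adj hiso]
    have hx₀ : ∀ v ∈ t.erase u, x v = 0 := hns x fun v hv => by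
      rw [rowSum_erase_of_not_adj fun h => hiso v (Finset.mem_of_mem_erase hv) h.symm,
        hx v (Finset.mem_of_mem_erase hv), hc]
    refine ⟨x u, by rw [hc, mul_zero], fun v hv => ?_⟩
    obtain rfl | hvu := eq_or_ne v u
    · simp
    · rw [hx₀ v (Finset.mem_erase.mpr ⟨hvu, hv⟩), Pi.single_eq_of_ne hvu, mul_zero]
  · rintro ⟨a, rfl, hxa⟩ v hv
    refine (Finset.sum_eq_zero fun w hw => ?_).trans (mul_zero a).symm
    obtain rfl | hwu := eq_or_ne w u
    · simp [show ¬G.Adj v w from fun h => hiso v hv h.symm]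
    · simp [hxa w hw, hwu]

def TwinFreeOn (G : SimpleGraph V) (s : Finset V) : Prop :=
  ∀ v ∈ s, ∀ w ∈ s, (∀ u ∈ s, G.Adj v u ↔ G.Adj w u) → v = w

structure IsReducedOn (G : SimpleGraph V) (s : Finset V) : Prop where
  exists_adj : ∀ v ∈ s, ∃ u ∈ s, G.Adj v u
  twinFreeOn : G.TwinFreeOn s

theorem TwinFreeOn.mono {s t : Finset V} (h : G.TwinFreeOn s) (hts : t ⊆ s)
    (hmod : ∀ u ∈ s \ t, ∀ v ∈ t, ∀ w ∈ t, G.Adj v u ↔ G.Adj w u) : G.TwinFreeOn t := by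
  refine fun v hv w hw hvw => h v (hts hv) w (hts hw) fun u hu => ?_
  by_cases hut : u ∈ t
  · exact hvw u hut
  · exact hmod u (Finset.mem_sdiff.mpr ⟨hu, hut⟩) v hv w hw

theorem TwinFreeOn.isReducedOn_erase {t : Finset V} {u : V} (h : G.TwinFreeOn t) (hu : u ∈ t)
    (hiso : ∀ w ∈ t, ¬G.Adj u w) : G.IsReducedOn (t.erase u) where
  exists_adj v hv := by
    by_contra hno
    push Not at hno
    refine (Finset.mem_erase.mp hv).1 (h v (Finset.mem_of_mem_erase hv) u hu fun w hw => ?_)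
    refine iff_of_false (fun hvw => ?_) (hiso w hw)
    obtain rfl | hwu := eq_or_ne w u
    · exact hiso v (Finset.mem_of_mem_erase hv) hvw.symm
    · exact hno w (Finset.mem_erase.mpr ⟨hwu, hw⟩) hvw
  twinFreeOn := h.mono (Finset.erase_subset u t) fun w hw v hv v' hv' => by
    obtain ⟨hwt, hwu⟩ := Finset.mem_sdiff.mp hw
    obtain rfl : w = u := by_contra fun h => hwu (Finset.mem_erase.mpr ⟨h, hwt⟩)
    exact iff_of_false (fun h => hiso v (Finset.mem_of_mem_erase hv) h.symm)
      (fun h => hiso v' (Finset.mem_of_mem_erase hv') h.symm)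

theorem IsReducedOn.one_lt_card {s : Finset V} (hs : G.IsReducedOn s) (hne : s.Nonempty) :
    1 < s.card := by
  obtain ⟨v, hv⟩ := hne
  obtain ⟨u, hu, hvu⟩ := hs.exists_adj v hv
  exact Finset.one_lt_card.mpr ⟨v, hv, u, hu, hvu.ne⟩

theorem SeparatesOn.isReducedOn {s t : Finset V} (h : G.SeparatesOn s t)
    (hs : G.IsReducedOn s) : G.IsReducedOn t where
  exists_adj v hv := by
    obtain ⟨u, hu, hvu⟩ := hs.exists_adj v (h.subset hv)
    refine ⟨u, by_contra fun hut => h.not_adj v hv u (Finset.mem_sdiff.mpr ⟨hu, hut⟩) hvu, hvu⟩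
  twinFreeOn := hs.twinFreeOn.mono h.subset fun u hu v hv w hw =>
    iff_of_false (h.not_adj v hv u hu) (h.not_adj w hw u hu)

theorem SeparatesOn.twinFreeOn_of_compl {s t : Finset V} (h : Gᶜ.SeparatesOn s t)
    (hs : G.TwinFreeOn s) : G.TwinFreeOn t :=
  hs.mono h.subset fun _ hu _ hv _ hw => iff_of_true (h.adj_of_compl hv hu) (h.adj_of_compl hw hu)

theorem TwinFreeOn.exists_isLevelLine {t : Finset V} (ht : G.TwinFreeOn t) (hne : t.Nonempty)
    (ih : ∀ r ⊆ t, G.IsReducedOn r → r.Nonempty → ∃ y, G.IsLevelLine r y 1 ∧ 1 < ∑ v ∈ r, y v) :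
    ∃ y k, G.IsLevelLine t y k ∧ 0 ≤ k ∧ k < ∑ v ∈ t, y v := by
  by_cases hiso : ∃ u ∈ t, ∀ w ∈ t, ¬G.Adj u w
  · obtain ⟨u, hu, hiso⟩ := hiso
    have hns : G.IsNonsingularOn (t.erase u) := isNonsingularOn_of_nonempty_imp fun hne' =>
      (ih _ (Finset.erase_subset u t) (ht.isReducedOn_erase hu hiso) hne').imp fun _ => And.left
    exact ⟨Pi.single u 1, 0, isLevelLine_single_of_isolated hu hiso hns, le_rfl, by simp [hu]⟩
  · push Not at hiso
    obtain ⟨y, hy, hα⟩ := ih t subset_rfl ⟨hiso, ht⟩ hne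
    exact ⟨y, 1, hy, zero_le_one, hα⟩

theorem IsReducedOn.exists_isLevelLine (hG : IsCograph G) {s : Finset V}
    (hs : G.IsReducedOn s) (hne : s.Nonempty) : ∃ y, G.IsLevelLine s y 1 ∧ 1 < ∑ v ∈ s, y v := by
  induction s using Finset.strongInduction with
  | H s ih =>
  obtain ⟨t, h | h⟩ := exists_separatesOn hG (hs.one_lt_card hne)
  · obtain ⟨y₁, h₁, hα₁⟩ := ih t h.ssubset (h.isReducedOn hs) h.nonempty
    obtain ⟨y₂, h₂, hα₂⟩ := ih (s \ t) h.symm.ssubset (h.symm.isReducedOn hs) h.symm.nonempty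
    exact h.exists_isLevelLine h₁ hα₁ h₂ hα₂
  · obtain ⟨y₁, k₁, h₁, hk₁, hα₁⟩ := (h.twinFreeOn_of_compl hs.twinFreeOn).exists_isLevelLine
      h.nonempty fun r hr => ih r (hr.trans_ssubset h.ssubset)
    obtain ⟨y₂, k₂, h₂, hk₂, hα₂⟩ := (h.symm.twinFreeOn_of_compl hs.twinFreeOn).exists_isLevelLine
      h.symm.nonempty fun r hr => ih r (hr.trans_ssubset h.symm.ssubset)
    exact h.exists_isLevelLine_of_compl h₁ hk₁ hα₁ h₂ hk₂ hα₂

theorem IsReducedOn.isNonsingularOn (hG : IsCograph G) {s : Finset V} (hs : G.IsReducedOn s) :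
    G.IsNonsingularOn s :=
  isNonsingularOn_of_nonempty_imp fun hne => (hs.exists_isLevelLine hG hne).imp fun _ => And.left

end SimpleGraph

section Rows
variable {V : Type*} [Fintype V] {G : SimpleGraph V}
open SimpleGraph

theorem adjM_ne_zero_iff {v : V} : adjM G v ≠ 0 ↔ ∃ w, G.Adj v w := by
  simp [adjM, funext_iff]

theorem adj_of_adjM_eq {u u' v : V} (h : adjM G u' = adjM G u) (hvu : G.Adj v u) :
    G.Adj v u' := by
  have := congrFun h v
  simp [adjM, hvu.symm] at this
  exact this.symm

theorem isReducedOn_of_image_eq {s : Finset V}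
    (hs : (fun v => adjM G v) '' s = (Set.range fun v => adjM G v) \ {0})
    (hinj : Set.InjOn (fun v => adjM G v) s) : G.IsReducedOn s := by
  have hrep {v w : V} (h : G.Adj v w) : ∃ w' ∈ s, adjM G w' = adjM G w := by
    have : adjM G w ∈ (fun v => adjM G v) '' s :=
      hs ▸ ⟨⟨w, rfl⟩, adjM_ne_zero_iff.mpr ⟨v, h.symm⟩⟩
    exact this
  refine ⟨fun v hv => ?_, fun v hv w hw hvw => hinj hv hw (funext fun u => ?_)⟩
  · have hv' : adjM G v ∈ (Set.range fun v => adjM G v) \ {0} := hs ▸ ⟨v, hv, rfl⟩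
    obtain ⟨w, hvw⟩ := adjM_ne_zero_iff.mp hv'.2
    obtain ⟨w', hw', he⟩ := hrep hvw
    exact ⟨w', hw', adj_of_adjM_eq he hvw⟩
  · suffices G.Adj v u ↔ G.Adj w u by simp [adjM, this]
    constructor
    · intro hvu
      obtain ⟨u', hu', he⟩ := hrep hvu
      exact adj_of_adjM_eq he.symm ((hvw u' hu').mp (adj_of_adjM_eq he hvu))
    · intro hwu
      obtain ⟨u', hu', he⟩ := hrep hwu
      exact adj_of_adjM_eq he.symm ((hvw u' hu').mpr (adj_of_adjM_eq he hwu))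

theorem rowSum_eq_sum_smul_adjM (t : Finset V) (x : V → ℝ) (v : V) :
    G.rowSum t x v = (∑ u ∈ t, x u • adjM G u) v := by
  simp [rowSum, adjM, Finset.sum_apply, adjMatrix_apply, G.adj_comm, mul_comm]

theorem SimpleGraph.IsNonsingularOn.linearIndepOn_adjM {s : Finset V} (h : G.IsNonsingularOn s) :
    LinearIndepOn ℝ (fun v => adjM G v) (s : Set V) :=
  linearIndepOn_finset_iff.mpr fun c hc v hv =>
    h c (fun w _ => by rw [rowSum_eq_sum_smul_adjM, hc]; rfl) v hv

theorem IsCograph.linearIndepOn_nonzero_rows (hG : IsCograph G) :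
    LinearIndepOn ℝ id ((Set.range fun v => adjM G v) \ {0}) := by
  obtain ⟨U, hU, hinj⟩ := Set.exists_image_eq_injOn_of_subset_range
    (Set.sdiff_subset : (Set.range fun v => adjM G v) \ {0} ⊆ _)
  rw [← Set.coe_toFinset U] at hU hinj
  rw [← hU]
  exact ((isReducedOn_of_image_eq hU hinj).isNonsingularOn hG).linearIndepOn_adjM.id_image

end Rows

/-- Sillke's conjecture: the rank of the adjacency matrix of a cograph equals the
number of its distinct nonzero rows. -/
theorem cograph_rank_eq_distinct_nonzero_rows {V : Type*} [Fintype V]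
    (G : SimpleGraph V) (hG : IsCograph G) :
    (adjM G).rank = ((Set.range fun v => adjM G v) \ {0}).ncard := by
  rw [Matrix.rank_eq_finrank_span_row, Matrix.row, ← Submodule.span_sdiff_singleton_zero,
    finrank_span_set_eq_card hG.linearIndepOn_nonzero_rows, Set.ncard_eq_toFinset_card']
end
end

section
/- Every eigenvalue λ of a threshold graph with λ ≠ 0 and λ ≠ -1 is simple (has multiplicity 1). -/
open scoped Classical

noncomputable section

/-- A threshold graph: simultaneously a cograph and a split graph. -/
def IsThreshold {V : Type*} (G : SimpleGraph V) : Prop :=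
  IsCograph G ∧ ∃ K I : Set V, K ∪ I = Set.univ ∧ Disjoint K I ∧
    G.IsClique K ∧ Gᶜ.IsClique I

/-!
A threshold graph has an isolated or a dominating vertex `w`: take a minimum or a maximum of
the vicinal preorder, which is total because a split cograph has no induced `P₄`, `C₄` or `2K₂`.
For `μ ∉ {0, -1}`, a `μ`-eigenvector `z` with coordinate sum `0` vanishes at `w`: if `w` is
isolated then `μ z_w = 0`, and if it is dominating then `μ z_w = ∑_{x ≠ w} z_x = -z_w`.
Hence `z` restricts to such an eigenvector of the threshold graph `G - w`, and by induction
`z = 0`. So the coordinate sum is injective on the eigenspace, whose dimension is at most `1`.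
-/

lemma exists_forall_rel_of_total {α : Type*} [Finite α] [Nonempty α] {r : α → α → Prop}
    (htrans : ∀ {a b c}, r a b → r b c → r a c) (htot : ∀ a b, r a b ∨ r b a) :
    ∃ m, ∀ x, r x m := by
  classical
  have := Fintype.ofFinite α
  obtain ⟨m, hm⟩ := Finite.exists_max fun x => (Finset.univ.filter (r · x)).card
  refine ⟨m, fun x => by_contra fun hxm => ?_⟩
  have hmx := (htot x m).resolve_left hxm
  have hsub : Finset.univ.filter (r · m) ⊂ Finset.univ.filter (r · x) :=
    (Finset.ssubset_iff_of_subset fun y hy => by simp_all [htrans _ hmx]).mpr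
      ⟨x, by simp [(htot x x).elim id id], by simpa using hxm⟩
  exact (Finset.card_lt_card hsub).not_ge (hm x)

open SimpleGraph

section Threshold

variable {V : Type*} {G : SimpleGraph V}

lemma IsCograph.false_of_induced_path (hG : IsCograph G) {x₀ x₁ x₂ x₃ : V}
    (h₀₁ : G.Adj x₀ x₁) (h₁₂ : G.Adj x₁ x₂) (h₂₃ : G.Adj x₂ x₃)
    (h₀₂ : Gᶜ.Adj x₀ x₂) (h₁₃ : Gᶜ.Adj x₁ x₃) (h₀₃ : Gᶜ.Adj x₀ x₃) : False := by
  rw [compl_adj] at h₀₂ h₁₃ h₀₃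
  obtain ⟨n₀₂, h₀₂⟩ := h₀₂
  obtain ⟨n₁₃, h₁₃⟩ := h₁₃
  obtain ⟨n₀₃, h₀₃⟩ := h₀₃
  have n₀₁ := h₀₁.ne
  have n₁₂ := h₁₂.ne
  have n₂₃ := h₂₃.ne
  have h₂₀ : ¬G.Adj x₂ x₀ := fun h => h₀₂ h.symm
  have h₃₁ : ¬G.Adj x₃ x₁ := fun h => h₁₃ h.symm
  have h₃₀ : ¬G.Adj x₃ x₀ := fun h => h₀₃ h.symm
  refine hG.false ⟨⟨![x₀, x₁, x₂, x₃], fun a b hab => ?_⟩, fun {a b} => ?_⟩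
  · fin_cases a <;> fin_cases b <;> simp_all
  · change G.Adj (![x₀, x₁, x₂, x₃] a) (![x₀, x₁, x₂, x₃] b) ↔ _
    fin_cases a <;> fin_cases b <;>
      simp [pathGraph_adj, h₀₁, h₁₂, h₂₃, h₀₁.symm, h₁₂.symm, h₂₃.symm, h₀₂, h₁₃, h₀₃,
        h₂₀, h₃₁, h₃₀]

section Split

variable {K I : Set V}

lemma SimpleGraph.mem_or_mem_of_adj (hKI : K ∪ I = Set.univ) (hI : Gᶜ.IsClique I) {x y : V}
    (h : G.Adj x y) : x ∈ K ∨ y ∈ K := by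
  by_contra! hxy
  have hx : x ∈ I := (hKI ▸ Set.mem_univ x : x ∈ K ∪ I).resolve_left hxy.1
  have hy : y ∈ I := (hKI ▸ Set.mem_univ y : y ∈ K ∪ I).resolve_left hxy.2
  exact ((G.compl_adj x y).1 (hI hx hy h.ne)).2 h

lemma SimpleGraph.false_of_induced_two_edges (hKI : K ∪ I = Set.univ) (hK : G.IsClique K)
    (hI : Gᶜ.IsClique I) {x y z w : V} (hxy : G.Adj x y) (hzw : G.Adj z w) (hxz : Gᶜ.Adj x z)
    (hxw : Gᶜ.Adj x w) (hyz : Gᶜ.Adj y z) (hyw : Gᶜ.Adj y w) : False := by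
  have hclique {p q : V} (hp : p ∈ K) (hq : q ∈ K) (hpq : Gᶜ.Adj p q) : False :=
    ((G.compl_adj p q).1 hpq).2 (hK hp hq ((G.compl_adj p q).1 hpq).1)
  rcases mem_or_mem_of_adj hKI hI hxy with h₁ | h₁ <;>
    rcases mem_or_mem_of_adj hKI hI hzw with h₂ | h₂
  exacts [hclique h₁ h₂ hxz, hclique h₁ h₂ hxw, hclique h₁ h₂ hyz, hclique h₁ h₂ hyw]

end Split

def SimpleGraph.VicinalLE (G : SimpleGraph V) (u v : V) : Prop :=
  ∀ a, G.Adj u a → a ≠ v → G.Adj v a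

lemma SimpleGraph.VicinalLE.trans {u v w : V} (huv : G.VicinalLE u v) (hvw : G.VicinalLE v w) :
    G.VicinalLE u w := by
  intro a hua haw
  by_cases huw : u = w
  · exact huw ▸ hua
  by_cases hav : a = v
  · subst hav
    exact (huv w (hvw u hua.symm huw).symm fun h => haw h.symm).symm
  · exact hvw a (huv a hua hav) haw

lemma IsThreshold.vicinalLE_total (hG : IsThreshold G) (u v : V) :
    G.VicinalLE u v ∨ G.VicinalLE v u := by
  by_contra! h
  simp only [VicinalLE, not_forall] at h
  obtain ⟨⟨a, hua, hav, hva⟩, ⟨b, hvb, hbu, hub⟩⟩ := h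
  obtain ⟨hC, K, I, hKI, -, hK, hI⟩ := hG
  have c {p q : V} (hpq : p ≠ q) (h : ¬G.Adj p q) : Gᶜ.Adj p q :=
    (G.compl_adj p q).2 ⟨hpq, h⟩
  have hab : a ≠ b := fun h => hva (h ▸ hvb)
  by_cases huv : G.Adj u v <;> by_cases habj : G.Adj a b
  · -- the 4-cycle `u a b v` is two independent edges of the complement
    refine false_of_induced_two_edges (G := Gᶜ) (Set.union_comm K I ▸ hKI) hI (by rwa [compl_compl])
      (c hbu.symm hub) (c hav fun h => hva h.symm) ?_ ?_ ?_ ?_ <;> rw [compl_compl]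
    exacts [hua, huv, habj.symm, hvb.symm]
  · exact hC.false_of_induced_path hua.symm huv hvb (c hav fun h => hva h.symm) (c hbu.symm hub)
      (c hab habj)
  · exact hC.false_of_induced_path hua habj hvb.symm (c hbu.symm hub) (c hav fun h => hva h.symm)
      (c (fun h => hva (h ▸ hua)) huv)
  · exact false_of_induced_two_edges hKI hK hI hua hvb (c (fun h => hva (h ▸ hua)) huv)
      (c hbu.symm hub) (c hav fun h => hva h.symm) (c hab habj)

lemma IsThreshold.exists_isIsolated_or_isIsolated_compl [Finite V] [Nonempty V]
    (hG : IsThreshold G) : ∃ w, G.IsIsolated w ∨ Gᶜ.IsIsolated w := by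
  obtain ⟨m, hm⟩ := exists_forall_rel_of_total (r := G.VicinalLE)
    (fun h h' => h.trans h') hG.vicinalLE_total
  obtain ⟨b, hb⟩ := exists_forall_rel_of_total (r := flip G.VicinalLE)
    (fun h h' => h'.trans h) fun x y => hG.vicinalLE_total y x
  by_cases hiso : G.IsIsolated b
  · exact ⟨b, .inl hiso⟩
  obtain ⟨a, hba⟩ := not_forall_not.mp hiso
  refine ⟨m, .inr fun u hmu => ((G.compl_adj m u).1 hmu).2 ?_⟩
  have hum := ((G.compl_adj m u).1 hmu).1.symm
  by_cases hau : a = u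
  · exact hau ▸ hm b a hba (hau ▸ hum)
  · exact hm a u (hb u a hba hau).symm hum

lemma IsThreshold.induce (hG : IsThreshold G) (s : Set V) : IsThreshold (G.induce s) := by
  obtain ⟨hC, K, I, hKI, hdisj, hK, hI⟩ := hG
  refine ⟨⟨fun f => hC.false ((Embedding.induce s).comp f)⟩, (↑) ⁻¹' K, (↑) ⁻¹' I, ?_,
    hdisj.preimage _, fun x hx y hy hxy => induce_adj.2 (hK hx hy (Subtype.coe_ne_coe.2 hxy)),
    fun x hx y hy hxy => ?_⟩
  · rw [← Set.preimage_union, hKI, Set.preimage_univ]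
  · exact (compl_adj _ _ _).2
      ⟨hxy, ((G.compl_adj _ _).1 (hI hx hy (Subtype.coe_ne_coe.2 hxy))).2⟩

end Threshold

section Spectral

open Matrix

variable {V : Type*} [Fintype V] {G : SimpleGraph V} {μ : ℝ} {z : V → ℝ}

lemma sum_subtype_compl_singleton {M : Type*} [AddCommMonoid M] {w : V} {f : V → M}
    (hf : f w = 0) : ∑ x : ({w}ᶜ : Set V), f x = ∑ x, f x := by
  rw [Fintype.sum_eq_add_sum_compl w f, hf, zero_add]
  exact (Finset.sum_subtype _ (fun x => by simp) f).symm

lemma adjM_induce_compl_singleton_mulVec {w : V} (hw : z w = 0) :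
    adjM (G.induce {w}ᶜ) *ᵥ (fun x => z x) = fun x : ({w}ᶜ : Set V) => (adjM G *ᵥ z) x := by
  ext u
  simp only [mulVec, dotProduct, adjM, adjMatrix_apply, induce_adj]
  exact sum_subtype_compl_singleton (f := fun x => G.adjMatrix ℝ u x * z x) (by rw [hw, mul_zero])

lemma apply_eq_zero_of_isIsolated (hz : adjM G *ᵥ z = μ • z) (h0 : μ ≠ 0) {w : V}
    (hw : G.IsIsolated w) : z w = 0 := by
  have hzw := congrFun hz w
  rw [adjM, adjMatrix_mulVec_apply,
    Finset.sum_eq_zero fun x hx => absurd ((G.mem_neighborFinset w x).1 hx) (hw x)] at hzw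
  simpa [h0] using hzw.symm

lemma apply_eq_zero_of_isIsolated_compl (hz : adjM G *ᵥ z = μ • z) (h1 : μ ≠ -1)
    (hsum : ∑ x, z x = 0) {w : V} (hw : Gᶜ.IsIsolated w) : z w = 0 := by
  have hN : G.neighborFinset w = {w}ᶜ := by
    ext x
    have := hw x
    rw [compl_adj, not_and_not_right] at this
    simp only [mem_neighborFinset, Finset.mem_compl, Finset.mem_singleton]
    exact ⟨fun h => h.ne.symm, fun h => this (Ne.symm h)⟩
  have hzw := congrFun hz w
  rw [adjM, adjMatrix_mulVec_apply, hN, Pi.smul_apply, smul_eq_mul] at hzw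
  have hsplit := Fintype.sum_eq_add_sum_compl w z
  have : (μ + 1) * z w = 0 := by linear_combination hsum - hsplit - hzw
  exact (mul_eq_zero.1 this).resolve_left fun h => h1 (by linarith)

lemma eq_zero_of_induce_compl_singleton {w : V}
    (hind : ∀ z' : ({w}ᶜ : Set V) → ℝ,
      adjM (G.induce {w}ᶜ) *ᵥ z' = μ • z' → ∑ x, z' x = 0 → z' = 0)
    (hz : adjM G *ᵥ z = μ • z) (hsum : ∑ x, z x = 0) (hw : z w = 0) : z = 0 := by
  have hres := hind (fun x => z x) (by rw [adjM_induce_compl_singleton_mulVec hw, hz]; rfl)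
    (by rw [sum_subtype_compl_singleton hw, hsum])
  funext x
  by_cases hx : x = w
  · exact hx ▸ hw
  · exact congrFun hres ⟨x, hx⟩

theorem IsThreshold.eq_zero_of_mulVec_eq_smul_of_sum_eq_zero (hG : IsThreshold G) (h0 : μ ≠ 0)
    (h1 : μ ≠ -1) (hz : adjM G *ᵥ z = μ • z) (hsum : ∑ x, z x = 0) : z = 0 := by
  induction hn : Fintype.card V using Nat.strong_induction_on generalizing V with
  | _ n ih =>
  cases isEmpty_or_nonempty V
  · exact Subsingleton.elim _ _
  obtain ⟨w, hw⟩ := hG.exists_isIsolated_or_isIsolated_compl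
  have hzw : z w = 0 := hw.elim (apply_eq_zero_of_isIsolated hz h0)
    (apply_eq_zero_of_isIsolated_compl hz h1 hsum)
  have hcard : Fintype.card ({w}ᶜ : Set V) < n :=
    hn ▸ Fintype.card_subtype_lt (p := (· ≠ w)) (x := w) (by simp)
  exact eq_zero_of_induce_compl_singleton
    (fun z' hz' hsum' => ih _ hcard (hG.induce _) hz' hsum' rfl) hz hsum hzw

end Spectral

/-- Every eigenvalue of a threshold graph other than 0 and -1 is simple. -/
theorem threshold_eigenvalue_simple {V : Type*} [Fintype V] (G : SimpleGraph V)
    (hG : IsThreshold G) (μ : ℝ) (hμ : HasEig G μ) (h0 : μ ≠ 0) (h1 : μ ≠ -1) :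
    eigMult G μ = 1 := by
  set E := Module.End.eigenspace (Matrix.toLin' (adjM G)) μ
  have hsum_inj :
      Function.Injective ((∑ x, LinearMap.proj x : (V → ℝ) →ₗ[ℝ] ℝ) ∘ₗ E.subtype) := by
    refine (injective_iff_map_eq_zero _).2 fun z hz => Subtype.ext ?_
    refine hG.eq_zero_of_mulVec_eq_smul_of_sum_eq_zero h0 h1 ?_ (by simpa using hz)
    exact (Module.End.mem_eigenspace_iff.1 z.2).trans rfl
  refine le_antisymm ?_ (Submodule.one_le_finrank_iff.2 (Module.End.hasEigenvalue_iff.1 hμ))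
  exact (LinearMap.finrank_le_finrank_of_injective hsum_inj).trans_eq (Module.finrank_self ℝ)
end
end
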